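/- For every formula C of 2Int and all finite multisets Γ, Δ of formulas, the sequent (Γ; Δ, C) ⊢⁻ C is derivable in SC2Int. -/
import Mathlib


/-- Polarity of the derivability relation: `pos` for verification (⊢⁺),
`neg` for falsification (⊢⁻). -/
inductive Pol : Type where
  | pos : Pol
  | neg : Pol

/-- Formulas of the bi-intuitionistic logic 2Int. -/
inductive Form : Type where
  | atom : ℕ → Form
  | bot : Form
  | top : Form
  | conj : Form → Form → Form
  | disj : Form → Form → Form
  | imp : Form → Form → Form
  | coimp : Form → Form → Form

open Form Pol

/-- `Deriv Γ Δ s C n` means the sequent (Γ; Δ) ⊢^s C is derivable in SC2Int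
with a derivation of height at most `n`. Zero-premise rules have height 0
(hence are derivable with any bound `n`), and each logical rule adds one to
the (common bound on the) heights of its premises. -/
inductive Deriv : Multiset Form → Multiset Form → Pol → Form → ℕ → Prop where
  | refPos (Γ Δ : Multiset Form) (p : ℕ) (n : ℕ) :
      Deriv (atom p ::ₘ Γ) Δ pos (atom p) n
  | refNeg (Γ Δ : Multiset Form) (p : ℕ) (n : ℕ) :
      Deriv Γ (atom p ::ₘ Δ) neg (atom p) n
  | botLa (Γ Δ : Multiset Form) (s : Pol) (C : Form) (n : ℕ) :
      Deriv (bot ::ₘ Γ) Δ s C n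
  | topLc (Γ Δ : Multiset Form) (s : Pol) (C : Form) (n : ℕ) :
      Deriv Γ (top ::ₘ Δ) s C n
  | botRneg (Γ Δ : Multiset Form) (n : ℕ) :
      Deriv Γ Δ neg bot n
  | topRpos (Γ Δ : Multiset Form) (n : ℕ) :
      Deriv Γ Δ pos top n
  | conjRpos {Γ Δ : Multiset Form} {A B : Form} {n : ℕ} :
      Deriv Γ Δ pos A n → Deriv Γ Δ pos B n → Deriv Γ Δ pos (conj A B) (n + 1)
  | conjLa {Γ Δ : Multiset Form} {A B : Form} {s : Pol} {C : Form} {n : ℕ} :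
      Deriv (A ::ₘ B ::ₘ Γ) Δ s C n → Deriv (conj A B ::ₘ Γ) Δ s C (n + 1)
  | conjRneg1 {Γ Δ : Multiset Form} {A B : Form} {n : ℕ} :
      Deriv Γ Δ neg A n → Deriv Γ Δ neg (conj A B) (n + 1)
  | conjRneg2 {Γ Δ : Multiset Form} {A B : Form} {n : ℕ} :
      Deriv Γ Δ neg B n → Deriv Γ Δ neg (conj A B) (n + 1)
  | conjLc {Γ Δ : Multiset Form} {A B : Form} {s : Pol} {C : Form} {n : ℕ} :
      Deriv Γ (A ::ₘ Δ) s C n → Deriv Γ (B ::ₘ Δ) s C n →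
      Deriv Γ (conj A B ::ₘ Δ) s C (n + 1)
  | disjRpos1 {Γ Δ : Multiset Form} {A B : Form} {n : ℕ} :
      Deriv Γ Δ pos A n → Deriv Γ Δ pos (disj A B) (n + 1)
  | disjRpos2 {Γ Δ : Multiset Form} {A B : Form} {n : ℕ} :
      Deriv Γ Δ pos B n → Deriv Γ Δ pos (disj A B) (n + 1)
  | disjLa {Γ Δ : Multiset Form} {A B : Form} {s : Pol} {C : Form} {n : ℕ} :
      Deriv (A ::ₘ Γ) Δ s C n → Deriv (B ::ₘ Γ) Δ s C n →
      Deriv (disj A B ::ₘ Γ) Δ s C (n + 1)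
  | disjRneg {Γ Δ : Multiset Form} {A B : Form} {n : ℕ} :
      Deriv Γ Δ neg A n → Deriv Γ Δ neg B n → Deriv Γ Δ neg (disj A B) (n + 1)
  | disjLc {Γ Δ : Multiset Form} {A B : Form} {s : Pol} {C : Form} {n : ℕ} :
      Deriv Γ (A ::ₘ B ::ₘ Δ) s C n → Deriv Γ (disj A B ::ₘ Δ) s C (n + 1)
  | impRpos {Γ Δ : Multiset Form} {A B : Form} {n : ℕ} :
      Deriv (A ::ₘ Γ) Δ pos B n → Deriv Γ Δ pos (imp A B) (n + 1)
  | impLa {Γ Δ : Multiset Form} {A B : Form} {s : Pol} {C : Form} {n : ℕ} :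
      Deriv (imp A B ::ₘ Γ) Δ pos A n → Deriv (B ::ₘ Γ) Δ s C n →
      Deriv (imp A B ::ₘ Γ) Δ s C (n + 1)
  | impRneg {Γ Δ : Multiset Form} {A B : Form} {n : ℕ} :
      Deriv Γ Δ pos A n → Deriv Γ Δ neg B n → Deriv Γ Δ neg (imp A B) (n + 1)
  | impLc {Γ Δ : Multiset Form} {A B : Form} {s : Pol} {C : Form} {n : ℕ} :
      Deriv (A ::ₘ Γ) (B ::ₘ Δ) s C n → Deriv Γ (imp A B ::ₘ Δ) s C (n + 1)
  | coimpRpos {Γ Δ : Multiset Form} {A B : Form} {n : ℕ} :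
      Deriv Γ Δ pos A n → Deriv Γ Δ neg B n → Deriv Γ Δ pos (coimp A B) (n + 1)
  | coimpLa {Γ Δ : Multiset Form} {A B : Form} {s : Pol} {C : Form} {n : ℕ} :
      Deriv (A ::ₘ Γ) (B ::ₘ Δ) s C n → Deriv (coimp A B ::ₘ Γ) Δ s C (n + 1)
  | coimpRneg {Γ Δ : Multiset Form} {A B : Form} {n : ℕ} :
      Deriv Γ (B ::ₘ Δ) neg A n → Deriv Γ Δ neg (coimp A B) (n + 1)
  | coimpLc {Γ Δ : Multiset Form} {A B : Form} {s : Pol} {C : Form} {n : ℕ} :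
      Deriv Γ (coimp A B ::ₘ Δ) neg B n → Deriv Γ (A ::ₘ Δ) s C n →
      Deriv Γ (coimp A B ::ₘ Δ) s C (n + 1)

/-- The sequent (Γ; Δ) ⊢^s C is derivable in SC2Int (with some height). -/
def Derivable (Γ Δ : Multiset Form) (s : Pol) (C : Form) : Prop :=
  ∃ n : ℕ, Deriv Γ Δ s C n

lemma Deriv.step {Γ Δ : Multiset Form} {s : Pol} {C : Form} {n : ℕ}
    (h : Deriv Γ Δ s C n) : Deriv Γ Δ s C (n + 1) := by
  induction h with
  | refPos Γ Δ p n => exact Deriv.refPos Γ Δ p (n+1)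
  | refNeg Γ Δ p n => exact Deriv.refNeg Γ Δ p (n+1)
  | botLa Γ Δ s C n => exact Deriv.botLa Γ Δ s C (n+1)
  | topLc Γ Δ s C n => exact Deriv.topLc Γ Δ s C (n+1)
  | botRneg Γ Δ n => exact Deriv.botRneg Γ Δ (n+1)
  | topRpos Γ Δ n => exact Deriv.topRpos Γ Δ (n+1)
  | conjRpos _ _ ih1 ih2 => exact Deriv.conjRpos ih1 ih2
  | conjLa _ ih => exact Deriv.conjLa ih
  | conjRneg1 _ ih => exact Deriv.conjRneg1 ih
  | conjRneg2 _ ih => exact Deriv.conjRneg2 ih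
  | conjLc _ _ ih1 ih2 => exact Deriv.conjLc ih1 ih2
  | disjRpos1 _ ih => exact Deriv.disjRpos1 ih
  | disjRpos2 _ ih => exact Deriv.disjRpos2 ih
  | disjLa _ _ ih1 ih2 => exact Deriv.disjLa ih1 ih2
  | disjRneg _ _ ih1 ih2 => exact Deriv.disjRneg ih1 ih2
  | disjLc _ ih => exact Deriv.disjLc ih
  | impRpos _ ih => exact Deriv.impRpos ih
  | impLa _ _ ih1 ih2 => exact Deriv.impLa ih1 ih2
  | impRneg _ _ ih1 ih2 => exact Deriv.impRneg ih1 ih2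
  | impLc _ ih => exact Deriv.impLc ih
  | coimpRpos _ _ ih1 ih2 => exact Deriv.coimpRpos ih1 ih2
  | coimpLa _ ih => exact Deriv.coimpLa ih
  | coimpRneg _ ih => exact Deriv.coimpRneg ih
  | coimpLc _ _ ih1 ih2 => exact Deriv.coimpLc ih1 ih2

lemma Deriv.mono {Γ Δ : Multiset Form} {s : Pol} {C : Form} {n m : ℕ}
    (h : Deriv Γ Δ s C n) (hle : n ≤ m) : Deriv Γ Δ s C m := by
  induction hle with
  | refl => exact h
  | step _ ih => exact ih.step

lemma refl_both (C : Form) :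
    (∀ Γ Δ, ∃ n, Deriv (C ::ₘ Γ) Δ pos C n) ∧
    (∀ Γ Δ, ∃ n, Deriv Γ (C ::ₘ Δ) neg C n) := by
  induction C with
  | atom p =>
      exact ⟨fun Γ Δ => ⟨0, Deriv.refPos Γ Δ p 0⟩,
             fun Γ Δ => ⟨0, Deriv.refNeg Γ Δ p 0⟩⟩
  | bot =>
      exact ⟨fun Γ Δ => ⟨0, Deriv.botLa Γ Δ pos bot 0⟩,
             fun Γ Δ => ⟨0, Deriv.botRneg Γ _ 0⟩⟩
  | top =>
      exact ⟨fun Γ Δ => ⟨0, Deriv.topRpos _ Δ 0⟩,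
             fun Γ Δ => ⟨0, Deriv.topLc Γ Δ neg top 0⟩⟩
  | conj A B ihA ihB =>
      constructor
      · intro Γ Δ
        obtain ⟨n1, h1⟩ := ihA.1 (B ::ₘ Γ) Δ
        obtain ⟨n2, h2⟩ := ihB.1 (A ::ₘ Γ) Δ
        rw [Multiset.cons_swap] at h2
        exact ⟨n1 ⊔ n2 + 2, Deriv.conjLa (Deriv.conjRpos
          (h1.mono (le_max_left _ _)) (h2.mono (le_max_right _ _)))⟩
      · intro Γ Δ
        obtain ⟨n1, h1⟩ := ihA.2 Γ Δ
        obtain ⟨n2, h2⟩ := ihB.2 Γ Δ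
        exact ⟨n1 ⊔ n2 + 2, Deriv.conjLc (Deriv.conjRneg1 (h1.mono (le_max_left _ _)))
          (Deriv.conjRneg2 (h2.mono (le_max_right _ _)))⟩
  | disj A B ihA ihB =>
      constructor
      · intro Γ Δ
        obtain ⟨n1, h1⟩ := ihA.1 Γ Δ
        obtain ⟨n2, h2⟩ := ihB.1 Γ Δ
        exact ⟨n1 ⊔ n2 + 2, Deriv.disjLa (Deriv.disjRpos1 (h1.mono (le_max_left _ _)))
          (Deriv.disjRpos2 (h2.mono (le_max_right _ _)))⟩
      · intro Γ Δ
        obtain ⟨n1, h1⟩ := ihA.2 Γ (B ::ₘ Δ)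
        obtain ⟨n2, h2⟩ := ihB.2 Γ (A ::ₘ Δ)
        rw [Multiset.cons_swap] at h2
        exact ⟨n1 ⊔ n2 + 2, Deriv.disjLc (Deriv.disjRneg
          (h1.mono (le_max_left _ _)) (h2.mono (le_max_right _ _)))⟩
  | imp A B ihA ihB =>
      constructor
      · intro Γ Δ
        obtain ⟨n1, h1⟩ := ihA.1 (imp A B ::ₘ Γ) Δ
        obtain ⟨n2, h2⟩ := ihB.1 (A ::ₘ Γ) Δ
        rw [Multiset.cons_swap] at h1
        have h := Deriv.impLa (h1.mono (le_max_left n1 n2)) (h2.mono (le_max_right n1 n2))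
        rw [Multiset.cons_swap] at h
        exact ⟨n1 ⊔ n2 + 2, Deriv.impRpos h⟩
      · intro Γ Δ
        obtain ⟨n1, h1⟩ := ihA.1 Γ (B ::ₘ Δ)
        obtain ⟨n2, h2⟩ := ihB.2 (A ::ₘ Γ) Δ
        exact ⟨n1 ⊔ n2 + 2, Deriv.impLc (Deriv.impRneg
          (h1.mono (le_max_left _ _)) (h2.mono (le_max_right _ _)))⟩
  | coimp A B ihA ihB =>
      constructor
      · intro Γ Δ
        obtain ⟨n1, h1⟩ := ihA.1 Γ (B ::ₘ Δ)
        obtain ⟨n2, h2⟩ := ihB.2 (A ::ₘ Γ) Δ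
        exact ⟨n1 ⊔ n2 + 2, Deriv.coimpLa (Deriv.coimpRpos
          (h1.mono (le_max_left _ _)) (h2.mono (le_max_right _ _)))⟩
      · intro Γ Δ
        obtain ⟨n1, h1⟩ := ihB.2 Γ (coimp A B ::ₘ Δ)
        obtain ⟨n2, h2⟩ := ihA.2 Γ (B ::ₘ Δ)
        rw [Multiset.cons_swap] at h1
        have h := Deriv.coimpLc (h1.mono (le_max_left n1 n2)) (h2.mono (le_max_right n1 n2))
        rw [Multiset.cons_swap] at h
        exact ⟨n1 ⊔ n2 + 2, Deriv.coimpRneg h⟩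

theorem reflexivity_neg (C : Form) (Γ Δ : Multiset Form) :
    Derivable Γ (C ::ₘ Δ) Pol.neg C := (refl_both C).2 Γ Δ
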